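/- Quasi-periodicity of the SAFT Zak transform: let f : ℝ → ℂ and t ∈ ℝ be such that Σ_{k∈ℤ} |f(t + k)| < ∞. Then for every ω ∈ ℝ, Z_A f(t, ω + Δ) = exp((Complex.I·Δ/(2b)) · (d·Δ + 2·d·ω + Ω)) · Z_A f(t, ω); in particular |Z_A f(t, ω + Δ)| = |Z_A f(t, ω)|. -/

import Mathlib

/- Shifting `ω` by `Δ = 2πb` changes the phase of the `k`-th kernel by the `k`-independent
amount `(Δ/2b)(dΔ + 2dω + Ω)` plus `-2πk`, and the latter is invisible to `exp`. -/

open MeasureTheory Real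

/-- The SAFT Zak transform of `f : ℝ → ℂ`, with `Ω = 2*(b*q - d*p)`. -/
noncomputable def saftZak (a b d p q : ℝ) (f : ℝ → ℂ) (t ω : ℝ) : ℂ :=
  (Real.sqrt (2 * π * b) : ℂ)⁻¹ *
    ∑' k : ℤ, f (t + (k : ℝ)) * Complex.exp (Complex.I / (2 * b) *
      ((d * ω ^ 2 + a * (k : ℝ) ^ 2 - 2 * (k : ℝ) * ω + 2 * (b * q - d * p) * ω
        + 2 * p * (k : ℝ) : ℝ) : ℂ))

section SaftZak

open Complex

variable (a b d p q : ℝ)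

noncomputable def saftZakKernel (ω : ℝ) (k : ℤ) : ℂ :=
  exp (I / (2 * b) *
    ((d * ω ^ 2 + a * (k : ℝ) ^ 2 - 2 * (k : ℝ) * ω + 2 * (b * q - d * p) * ω
      + 2 * p * (k : ℝ) : ℝ) : ℂ))

noncomputable def saftZakPeriodFactor (ω : ℝ) : ℂ :=
  exp (I * ((2 * π * b : ℝ) : ℂ) / (2 * b) *
    ((d * (2 * π * b) + 2 * d * ω + 2 * (b * q - d * p) : ℝ) : ℂ))

theorem saftZak_eq_tsum_kernel (f : ℝ → ℂ) (t ω : ℝ) :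
    saftZak a b d p q f t ω =
      (Real.sqrt (2 * π * b) : ℂ)⁻¹ * ∑' k : ℤ, f (t + k) * saftZakKernel a b d p q ω k :=
  rfl

theorem norm_exp_I_mul_ofReal_div_mul_ofReal (x y z : ℝ) :
    ‖exp (I * (x : ℂ) / y * (z : ℂ))‖ = 1 := by
  rw [norm_exp, mul_div_assoc, ← ofReal_div, mul_assoc, ← ofReal_mul]
  simp

theorem norm_saftZakPeriodFactor (ω : ℝ) : ‖saftZakPeriodFactor b d p q ω‖ = 1 := by
  simpa only [saftZakPeriodFactor, ofReal_mul, ofReal_ofNat] using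
    norm_exp_I_mul_ofReal_div_mul_ofReal (2 * π * b) (2 * b)
      (d * (2 * π * b) + 2 * d * ω + 2 * (b * q - d * p))

variable {b}

theorem saftZakKernel_add_period (hb : b ≠ 0) (ω : ℝ) (k : ℤ) :
    saftZakKernel a b d p q (ω + 2 * π * b) k =
      saftZakPeriodFactor b d p q ω * saftZakKernel a b d p q ω k := by
  have hphase : I / (2 * b) *
      ((d * (ω + 2 * π * b) ^ 2 + a * (k : ℝ) ^ 2 - 2 * (k : ℝ) * (ω + 2 * π * b)
        + 2 * (b * q - d * p) * (ω + 2 * π * b) + 2 * p * (k : ℝ) : ℝ) : ℂ) =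
      I * ((2 * π * b : ℝ) : ℂ) / (2 * b) *
          ((d * (2 * π * b) + 2 * d * ω + 2 * (b * q - d * p) : ℝ) : ℂ) +
        I / (2 * b) *
          ((d * ω ^ 2 + a * (k : ℝ) ^ 2 - 2 * (k : ℝ) * ω + 2 * (b * q - d * p) * ω
            + 2 * p * (k : ℝ) : ℝ) : ℂ) +
        (-k : ℤ) * (2 * π * I) := by
    have hb' : (b : ℂ) ≠ 0 := ofReal_ne_zero.mpr hb
    push_cast
    field_simp
    ring
  rw [saftZakKernel, hphase, Complex.exp_add, exp_int_mul_two_pi_mul_I, mul_one, Complex.exp_add]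
  rfl

theorem saftZak_add_period (hb : b ≠ 0) (f : ℝ → ℂ) (t ω : ℝ) :
    saftZak a b d p q f t (ω + 2 * π * b) =
      saftZakPeriodFactor b d p q ω * saftZak a b d p q f t ω := by
  simp only [saftZak_eq_tsum_kernel, saftZakKernel_add_period a d p q hb, mul_left_comm _
    (saftZakPeriodFactor b d p q ω), tsum_mul_left]

end SaftZak

theorem saftZak_quasi_periodic_general (a b d p q : ℝ) (hb : 0 < b)
    (f : ℝ → ℂ) (t : ℝ) :
    ∀ ω : ℝ,
      saftZak a b d p q f t (ω + 2 * π * b) =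
        Complex.exp (Complex.I * ((2 * π * b : ℝ) : ℂ) / (2 * b) *
          ((d * (2 * π * b) + 2 * d * ω + 2 * (b * q - d * p) : ℝ) : ℂ)) *
          saftZak a b d p q f t ω ∧
      ‖saftZak a b d p q f t (ω + 2 * π * b)‖ = ‖saftZak a b d p q f t ω‖ := by
  intro ω
  have hshift := saftZak_add_period a d p q hb.ne' f t ω
  refine ⟨hshift, ?_⟩
  rw [hshift, norm_mul, norm_saftZakPeriodFactor, one_mul]

/-- Quasi-periodicity of the SAFT Zak transform in `ω`, with `Δ = 2πb`. -/
theorem saftZak_quasi_periodic (a b c d p q : ℝ) (hb : 0 < b) (habcd : a * d - b * c = 1)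
    (f : ℝ → ℂ) (t : ℝ) (hf : Summable fun k : ℤ => ‖f (t + (k : ℝ))‖) :
    ∀ ω : ℝ,
      saftZak a b d p q f t (ω + 2 * π * b) =
        Complex.exp (Complex.I * ((2 * π * b : ℝ) : ℂ) / (2 * b) *
          ((d * (2 * π * b) + 2 * d * ω + 2 * (b * q - d * p) : ℝ) : ℂ)) *
          saftZak a b d p q f t ω ∧
      ‖saftZak a b d p q f t (ω + 2 * π * b)‖ = ‖saftZak a b d p q f t ω‖ :=
  saftZak_quasi_periodic_general a b d p q hb f t
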